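/- If s is a simple reflection and x, y elements of a Coxeter group W with sx > x, then (sx) ▷ y = min{s(x ▷ y), x ▷ y}. -/

import Mathlib

/-- The Bruhat order on a Coxeter group, via the subword property: `x ≤ y` iff some
reduced word for `y` has a subword whose product is `x`. -/
def CoxeterSystem.bruhatLE {B W : Type*} [Group W] {M : CoxeterMatrix B}
    (cs : CoxeterSystem M W) (x y : W) : Prop :=
  ∃ ω ω' : List B, cs.IsReduced ω ∧ cs.wordProd ω = y ∧
    List.Sublist ω' ω ∧ cs.wordProd ω' = x

/-- The set of products `u * y` with `u ≤ x` in the Bruhat order. -/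
def CoxeterSystem.triSet {B W : Type*} [Group W] {M : CoxeterMatrix B}
    (cs : CoxeterSystem M W) (x y : W) : Set W :=
  {w | ∃ u : W, cs.bruhatLE u x ∧ w = u * y}

/-- `m` is the unique minimal element of `S` with respect to the Bruhat order. -/
def CoxeterSystem.IsUniqueBruhatMin {B W : Type*} [Group W] {M : CoxeterMatrix B}
    (cs : CoxeterSystem M W) (S : Set W) (m : W) : Prop :=
  (m ∈ S ∧ ∀ z ∈ S, cs.bruhatLE z m → z = m) ∧
    ∀ z ∈ S, (∀ z' ∈ S, cs.bruhatLE z' z → z' = z) → z = m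

/-!
The Bruhat order is defined here by the subword property with respect to *some* reduced word;
the heart of the matter is that the choice of reduced word does not matter. This gives
transitivity, and lets us test `u ≤ s x` on a reduced word of `s x` that begins with `s`. To see
it we compare with the chain order generated by `v < v t` (`t` a reflection,
`ℓ v < ℓ (v t)`): the strong exchange condition turns a chain into a subword of every reduced
word, and a subword is reached by a chain thanks to the lifting property
`v ≤ w → v s ≤ w ∨ v s ≤ w s`. Strong exchange comes from the reflection representation of `W`
on `W × ZMod 2`, which shows that the parity of the number of occurrences of `t` in the right
inversion sequence of a word depends only on the product of the word.

The theorem is then a length count. A unique minimal element is a minimum, as lengths decrease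
strictly down the order. `x ▷ y` and `s (x ▷ y)` both lie in the set defining `(s x) ▷ y`, so
`(s x) ▷ y` lies below both. Conversely, writing `(s x) ▷ y = u y` with `u ≤ s x`,
either `u ≤ x` or `s u ≤ x`, so `(s x) ▷ y` or `s ((s x) ▷ y)` lies above `x ▷ y`.
-/

namespace CoxeterSystem

open List

variable {B W : Type*} [Group W] {M : CoxeterMatrix B} (cs : CoxeterSystem M W)

local prefix:100 "s" => cs.simple
local prefix:100 "π" => cs.wordProd
local prefix:100 "ℓ" => cs.length
local prefix:100 "ris" => cs.rightInvSeq
local prefix:100 "lis" => cs.leftInvSeq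

theorem prod_map_reverse_alternatingWord {G : Type*} [Monoid G] (f : B → G) (i j : B) (m : ℕ) :
    ((alternatingWord j i (2 * m)).reverse.map f).prod = (f i * f j) ^ m := by
  induction m with
  | zero => simp [alternatingWord]
  | succ m ih =>
    rw [show 2 * (m + 1) = 2 * m + 1 + 1 by ring, alternatingWord_succ, alternatingWord_succ]
    simp only [concat_eq_append, reverse_append, map_append, prod_append, ih]
    simp [pow_succ', mul_assoc]

theorem even_count_leftInvSeq_alternatingWord [DecidableEq W] (i j : B) (t : W) :
    Even ((lis (alternatingWord j i (2 * M i j))).count t) := by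
  set L := lis (alternatingWord j i (2 * M i j))
  have hL : ∀ k (hk : k < L.length), L[k] = s j * (s i * s j) ^ k := by
    intro k hk
    simp only [L, cs.getElem_leftInvSeq_alternatingWord j i (M i j) k (by simpa [L] using hk),
      prod_alternatingWord_eq_mul_pow]
    simp [Nat.add_div_of_dvd_right]
  have hlen : L.length = M i j + M i j := by simp [L]; omega
  have hperiod : L = L.take (M i j) ++ L.take (M i j) := by
    refine ext_getElem (by simp [hlen]) fun k hk₁ _ => ?_
    rw [getElem_append]
    split_ifs with hk
    · simp
    · have htake : (L.take (M i j)).length = M i j := by simp [hlen]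
      obtain ⟨n, rfl⟩ := Nat.exists_eq_add_of_le (not_lt.mp hk)
      simp only [getElem_take, hL, htake, Nat.add_sub_cancel_left, pow_add,
        simple_mul_simple_pow, one_mul]
  rw [hperiod, count_append]
  exact ⟨_, rfl⟩

section ReflectionRepresentation

variable [DecidableEq W]

/-- The action of `s i` on `T × {±1}` from Björner–Brenti's proof of strong exchange, with the
signs written additively in `ZMod 2` and the reflections `T` enlarged to all of `W`. -/
def reflectionPerm (i : B) : Equiv.Perm (W × ZMod 2) :=
  Function.Involutive.toPerm (fun p => (s i * p.1 * s i, p.2 + if p.1 = s i then 1 else 0)) <| by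
    rintro ⟨t, e⟩
    have hconj : s i * (s i * t * s i) * s i = t := by simp [mul_assoc]
    have hiff : s i * t * s i = s i ↔ t = s i := by
      constructor
      · intro h
        rw [← hconj, h]
        simp
      · rintro rfl
        simp
    simp only [hconj, hiff, add_assoc, CharTwo.add_self_eq_zero, add_zero]

theorem reflectionPerm_apply (i : B) (t : W) (e : ZMod 2) :
    cs.reflectionPerm i (t, e) = (s i * t * s i, e + if t = s i then 1 else 0) := rfl

theorem prod_map_reflectionPerm_apply (ω : List B) (t : W) (e : ZMod 2) :
    (ω.map cs.reflectionPerm).prod (t, e) =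
      (π ω * t * (π ω)⁻¹, e + ((ris ω).count t : ZMod 2)) := by
  induction ω generalizing t e with
  | nil => simp
  | cons a ω ih =>
    have hiff : π ω * t * (π ω)⁻¹ = s a ↔ (π ω)⁻¹ * s a * π ω = t := by
      constructor <;> intro h <;> rw [← h] <;> group
    simp only [map_cons, prod_cons, Equiv.Perm.mul_apply, ih, reflectionPerm_apply,
      wordProd_cons, rightInvSeq, count_cons, hiff, beq_iff_eq, mul_inv_rev, inv_simple]
    push_cast
    refine Prod.ext (by group) ?_
    ring

theorem isLiftable_reflectionPerm : M.IsLiftable cs.reflectionPerm := by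
  intro i j
  ext1 ⟨t, e⟩
  have hprod : π (alternatingWord j i (2 * M i j)).reverse = 1 := by
    rw [wordProd, prod_map_reverse_alternatingWord, simple_mul_simple_pow]
  rw [← prod_map_reverse_alternatingWord, prod_map_reflectionPerm_apply, rightInvSeq_reverse,
    count_reverse, hprod,
    ZMod.natCast_eq_zero_iff_even.mpr (cs.even_count_leftInvSeq_alternatingWord i j t)]
  simp

noncomputable def reflectionRep : W →* Equiv.Perm (W × ZMod 2) :=
  cs.lift ⟨cs.reflectionPerm, cs.isLiftable_reflectionPerm⟩

theorem reflectionRep_wordProd (ω : List B) :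
    cs.reflectionRep (π ω) = (ω.map cs.reflectionPerm).prod := by
  rw [wordProd, map_list_prod, map_map]
  congr 2
  funext i
  exact cs.lift_apply_simple cs.isLiftable_reflectionPerm i

noncomputable def inversionParity (w t : W) : ZMod 2 := (cs.reflectionRep w (t, 0)).2

theorem inversionParity_wordProd (ω : List B) (t : W) :
    cs.inversionParity (π ω) t = (ris ω).count t := by
  simp [inversionParity, reflectionRep_wordProd, prod_map_reflectionPerm_apply]

theorem reflectionRep_apply (w t : W) (e : ZMod 2) :
    cs.reflectionRep w (t, e) = (w * t * w⁻¹, e + cs.inversionParity w t) := by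
  obtain ⟨ω, rfl⟩ := cs.wordProd_surjective w
  rw [reflectionRep_wordProd, prod_map_reflectionPerm_apply, inversionParity_wordProd]

theorem inversionParity_mul (u v t : W) :
    cs.inversionParity (u * v) t =
      cs.inversionParity v t + cs.inversionParity u (v * t * v⁻¹) := by
  rw [inversionParity, map_mul, Equiv.Perm.mul_apply, reflectionRep_apply, reflectionRep_apply,
    zero_add]

theorem inversionParity_one (t : W) : cs.inversionParity 1 t = 0 := by
  simpa using cs.inversionParity_wordProd [] t

theorem inversionParity_simple_self (i : B) : cs.inversionParity (s i) (s i) = 1 := by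
  simpa using cs.inversionParity_wordProd [i] (s i)

theorem inversionParity_self {t : W} (ht : cs.IsReflection t) : cs.inversionParity t t = 1 := by
  obtain ⟨w, i, rfl⟩ := ht
  have hconj : w⁻¹ * (w * s i * w⁻¹) * w⁻¹⁻¹ = s i := by group
  have hinv := cs.inversionParity_mul w w⁻¹ (w * s i * w⁻¹)
  have hws := cs.inversionParity_mul w (s i) (s i)
  rw [mul_inv_cancel, inversionParity_one, hconj] at hinv
  rw [inversionParity_mul, hconj, hws, inversionParity_simple_self]
  simp only [mul_inv_cancel_right] at hws ⊢
  linear_combination -hinv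

theorem inversionParity_mul_self (w : W) {t : W} (ht : cs.IsReflection t) :
    cs.inversionParity (w * t) t = 1 + cs.inversionParity w t := by
  rw [inversionParity_mul, inversionParity_self cs ht, mul_inv_cancel_right]

theorem inversionParity_eq_zero_of_length_lt {w t : W} (h : ℓ w < ℓ (w * t)) :
    cs.inversionParity w t = 0 := by
  obtain ⟨ω, hω, rfl⟩ := cs.exists_isReduced w
  rw [inversionParity_wordProd, count_eq_zero.mpr fun hmem =>
    (cs.isRightInversion_of_mem_rightInvSeq hω hmem).2.not_gt h, Nat.cast_zero]

theorem inversionParity_eq_one_of_length_mul_lt {w t : W} (ht : cs.IsReflection t)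
    (h : ℓ (w * t) < ℓ w) : cs.inversionParity w t = 1 := by
  have hw : w * t * t = w := by rw [mul_assoc, ht.mul_self, mul_one]
  rw [← hw, inversionParity_mul_self cs _ ht,
    inversionParity_eq_zero_of_length_lt cs (by rwa [hw]), add_zero]

end ReflectionRepresentation

theorem strong_exchange (ω : List B) {t : W} (ht : cs.IsReflection t)
    (h : ℓ (π ω * t) < ℓ (π ω)) : ∃ k < ω.length, π (ω.eraseIdx k) = π ω * t := by
  classical
  have hcount := cs.inversionParity_eq_one_of_length_mul_lt ht h
  rw [inversionParity_wordProd] at hcount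
  have hmem : t ∈ ris ω :=
    count_pos_iff.mp <| Nat.pos_of_ne_zero fun h0 => by simp [h0] at hcount
  obtain ⟨k, hk, rfl⟩ := mem_iff_getElem.mp hmem
  refine ⟨k, by simpa using hk, ?_⟩
  rw [← wordProd_mul_getD_rightInvSeq, getD_eq_getElem _ _ hk]

variable {cs} in
theorem IsReduced.append_singleton {ω : List B} (hω : cs.IsReduced ω) {i : B}
    (h : ℓ (π ω) < ℓ (π ω * s i)) : cs.IsReduced (ω ++ [i]) := by
  have := cs.length_mul_simple (π ω) i
  unfold IsReduced
  rw [wordProd_append, wordProd_singleton, length_append, length_singleton, ← hω.eq]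
  omega

variable {cs} in
theorem IsReduced.cons {ω : List B} (hω : cs.IsReduced ω) {i : B}
    (h : ℓ (π ω) < ℓ (s i * π ω)) : cs.IsReduced (i :: ω) := by
  have := cs.length_simple_mul (π ω) i
  unfold IsReduced
  rw [wordProd_cons, length_cons, ← hω.eq]
  omega

theorem exists_sublist_isReduced (ω : List B) :
    ∃ ρ, ρ <+ ω ∧ cs.IsReduced ρ ∧ π ρ = π ω := by
  induction ω using reverseRecOn with
  | nil => exact ⟨[], Sublist.refl _, by simp [IsReduced], rfl⟩
  | append_singleton ω a ih =>
    obtain ⟨ρ, hsub, hρ, hπ⟩ := ih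
    have hπa : π (ω ++ [a]) = π ρ * s a := by rw [wordProd_append, wordProd_singleton, hπ]
    rcases lt_or_gt_of_ne (cs.length_mul_simple_ne (π ρ) a) with hdown | hup
    · obtain ⟨k, hk, hk_eq⟩ := cs.strong_exchange ρ (cs.isReflection_simple a) hdown
      refine ⟨ρ.eraseIdx k,
        (eraseIdx_sublist ρ k).trans (hsub.trans (sublist_append_left ω [a])), ?_,
        by rw [hk_eq, hπa]⟩
      have := cs.length_mul_simple (π ρ) a
      unfold IsReduced
      rw [hk_eq, length_eraseIdx_of_lt hk, ← hρ.eq]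
      omega
    · exact ⟨ρ ++ [a], hsub.append (Sublist.refl _), hρ.append_singleton hup,
        by rw [hπa, wordProd_append, wordProd_singleton]⟩

theorem eq_simple_or_length_mul_mul_simple_add_two_le {w t : W} {i : B} (ht : cs.IsReflection t)
    (hwi : ℓ (w * s i) < ℓ w) (hwt : ℓ (w * t) < ℓ w) :
    t = s i ∨ ℓ (w * t * s i) + 2 ≤ ℓ w := by
  obtain ⟨ρ, hρ, hρπ⟩ := cs.exists_isReduced (w * s i)
  have hw : π (ρ ++ [i]) = w := by
    rw [wordProd_append, wordProd_singleton, ← hρπ, mul_assoc, simple_mul_simple_self, mul_one]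
  have hlen : ℓ w = ρ.length + 1 := by
    have := cs.length_mul_simple w i
    rw [← hρ.eq, ← hρπ]
    omega
  obtain ⟨k, hk_lt, hk_eq⟩ := cs.strong_exchange (ρ ++ [i]) ht (by rwa [hw])
  rw [hw] at hk_eq
  rcases Nat.lt_or_ge k ρ.length with hk | hk
  · right
    rw [eraseIdx_append_of_lt_length hk, wordProd_append, wordProd_singleton] at hk_eq
    have := cs.length_wordProd_le (ρ.eraseIdx k)
    rw [length_eraseIdx_of_lt hk] at this
    rw [← hk_eq, mul_assoc, simple_mul_simple_self, mul_one]
    omega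
  · left
    obtain rfl : k = ρ.length := by simp at hk_lt; omega
    rw [eraseIdx_append_of_length_le le_rfl] at hk_eq
    simp only [Nat.sub_self, eraseIdx_cons_zero, append_nil] at hk_eq
    exact mul_left_cancel (hk_eq.symm.trans hρπ.symm)

def ChainStep (v w : W) : Prop := ∃ t, cs.IsReflection t ∧ v * t = w ∧ ℓ v < ℓ w

/-- The Bruhat order in its usual definition, as the transitive closure of `v < v t`. -/
def ChainLE : W → W → Prop := Relation.ReflTransGen cs.ChainStep

section ChainLE

variable {cs}

theorem ChainStep.mul_simple {v w : W} (h : cs.ChainStep v w) (i : B) :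
    cs.ChainStep (v * s i) (w * s i) ∨ v * s i = w := by
  obtain ⟨t, ht, rfl, hlt⟩ := h
  have ht' : cs.IsReflection (s i * t * s i) := by simpa using ht.conj (s i)
  have hmul : v * s i * (s i * t * s i) = v * t * s i := by simp [mul_assoc]
  rcases lt_or_gt_of_ne (ht'.length_mul_left_ne (v * s i)) with hdown | hup
  · right
    rw [hmul] at hdown
    have hv := cs.length_mul_simple v i
    have hvt := cs.length_mul_simple (v * t) i
    have hvtt : v * t * t = v := by rw [mul_assoc, ht.mul_self, mul_one]
    rcases cs.eq_simple_or_length_mul_mul_simple_add_two_le ht (w := v * t) (i := i) (by omega)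
      (by rwa [hvtt]) with rfl | hlen
    · rfl
    · rw [hvtt] at hlen
      omega
  · exact Or.inl ⟨_, ht', hmul, by rwa [hmul] at hup⟩

theorem ChainLE.mul_simple {v w : W} (h : cs.ChainLE v w) (i : B) :
    cs.ChainLE (v * s i) w ∨ cs.ChainLE (v * s i) (w * s i) := by
  induction h with
  | refl => exact Or.inr Relation.ReflTransGen.refl
  | tail _ hpw ih =>
    rcases ih with h | h
    · exact Or.inl (h.tail hpw)
    · rcases hpw.mul_simple i with hstep | heq
      · exact Or.inr (h.tail hstep)
      · exact Or.inl (heq ▸ h)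

variable (cs) in
theorem chainLE_of_sublist {ω : List B} (hω : cs.IsReduced ω) {ω' : List B} (h : ω' <+ ω) :
    cs.ChainLE (π ω') (π ω) := by
  induction ω using reverseRecOn generalizing ω' with
  | nil => rw [sublist_nil.mp h]; exact Relation.ReflTransGen.refl
  | append_singleton ω a ih =>
    have hω₁ : cs.IsReduced ω := by simpa using hω.take ω.length
    have hπ : π (ω ++ [a]) = π ω * s a := by rw [wordProd_append, wordProd_singleton]
    have hstep : cs.ChainStep (π ω) (π (ω ++ [a])) := by
      refine ⟨s a, cs.isReflection_simple a, hπ.symm, ?_⟩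
      rw [hω.eq, hω₁.eq]
      simp
    obtain ⟨l₁, l₂, rfl, h₁, h₂⟩ := sublist_append_iff.mp h
    rcases sublist_singleton.mp h₂ with rfl | rfl
    · rw [append_nil]
      exact (ih hω₁ h₁).tail hstep
    · rw [wordProd_append, wordProd_singleton]
      rcases (ih hω₁ h₁).mul_simple a with h | h
      · exact h.tail hstep
      · rwa [hπ]

theorem ChainLE.exists_sublist {u w : W} (h : cs.ChainLE u w) {ω : List B} (hω : cs.IsReduced ω)
    (hπ : π ω = w) : ∃ ρ, ρ <+ ω ∧ π ρ = u := by
  induction h generalizing ω with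
  | refl => exact ⟨ω, Sublist.refl ω, hπ⟩
  | @tail v _ _ hstep ih =>
    obtain ⟨t, ht, rfl, hlt⟩ := hstep
    have hv : π ω * t = v := by rw [hπ, mul_assoc, ht.mul_self, mul_one]
    obtain ⟨k, -, hk⟩ := cs.strong_exchange ω ht (by rwa [hv, hπ])
    obtain ⟨ρ, hsub, hρ, hρπ⟩ := cs.exists_sublist_isReduced (ω.eraseIdx k)
    obtain ⟨σ, hσ, hσπ⟩ := ih hρ (by rw [hρπ, hk, hv])
    exact ⟨σ, hσ.trans (hsub.trans (eraseIdx_sublist ω k)), hσπ⟩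

end ChainLE

section BruhatLE

variable {cs}

theorem bruhatLE_iff_chainLE {u w : W} : cs.bruhatLE u w ↔ cs.ChainLE u w := by
  constructor
  · rintro ⟨ω, ω', hω, rfl, hsub, rfl⟩
    exact cs.chainLE_of_sublist hω hsub
  · intro h
    obtain ⟨ω, hω, rfl⟩ := cs.exists_isReduced w
    obtain ⟨ρ, hsub, rfl⟩ := h.exists_sublist hω rfl
    exact ⟨ω, ρ, hω, rfl, hsub, rfl⟩

theorem bruhatLE.exists_sublist {u w : W} (h : cs.bruhatLE u w) {ω : List B}
    (hω : cs.IsReduced ω) (hπ : π ω = w) : ∃ ρ, ρ <+ ω ∧ π ρ = u :=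
  (bruhatLE_iff_chainLE.mp h).exists_sublist hω hπ

variable (cs) in
theorem bruhatLE_refl (w : W) : cs.bruhatLE w w :=
  bruhatLE_iff_chainLE.mpr Relation.ReflTransGen.refl

theorem bruhatLE_trans {u v w : W} (huv : cs.bruhatLE u v) (hvw : cs.bruhatLE v w) :
    cs.bruhatLE u w :=
  bruhatLE_iff_chainLE.mpr ((bruhatLE_iff_chainLE.mp huv).trans (bruhatLE_iff_chainLE.mp hvw))

theorem length_le_of_bruhatLE {u w : W} (h : cs.bruhatLE u w) : ℓ u ≤ ℓ w := by
  obtain ⟨ω, ω', hω, rfl, hsub, rfl⟩ := h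
  exact (cs.length_wordProd_le ω').trans (hω.eq ▸ hsub.length_le)

theorem eq_of_bruhatLE_of_length_le {u w : W} (h : cs.bruhatLE u w) (hl : ℓ w ≤ ℓ u) :
    u = w := by
  obtain ⟨ω, ω', hω, rfl, hsub, rfl⟩ := h
  have hlen : ω'.length = ω.length :=
    le_antisymm hsub.length_le (hω.eq ▸ hl.trans (cs.length_wordProd_le ω'))
  rw [hsub.eq_of_length hlen]

theorem bruhatLE_antisymm {u w : W} (huw : cs.bruhatLE u w) (hwu : cs.bruhatLE w u) : u = w :=
  eq_of_bruhatLE_of_length_le huw (length_le_of_bruhatLE hwu)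

theorem eq_or_eq_simple_mul_of_bruhatLE {a b : W} {i : B} (hab : cs.bruhatLE a b)
    (hba : cs.bruhatLE b (s i * a)) : b = a ∨ b = s i * a := by
  have hlen := cs.length_simple_mul a i
  by_cases hl : ℓ b ≤ ℓ a
  · exact Or.inl (eq_of_bruhatLE_of_length_le hab hl).symm
  · have := length_le_of_bruhatLE hba
    exact Or.inr (eq_of_bruhatLE_of_length_le hba (by omega))

theorem bruhatLE_simple_mul_of_bruhatLE {u x : W} {i : B} (h : cs.bruhatLE u x)
    (hx : ℓ x < ℓ (s i * x)) : cs.bruhatLE u (s i * x) := by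
  obtain ⟨ω, ω', hω, rfl, hsub, rfl⟩ := h
  exact ⟨i :: ω, ω', hω.cons hx, wordProd_cons .., hsub.cons i, rfl⟩

theorem simple_mul_bruhatLE_simple_mul {u x : W} {i : B} (h : cs.bruhatLE u x)
    (hx : ℓ x < ℓ (s i * x)) : cs.bruhatLE (s i * u) (s i * x) := by
  obtain ⟨ω, ω', hω, rfl, hsub, rfl⟩ := h
  exact ⟨i :: ω, i :: ω', hω.cons hx, wordProd_cons .., hsub.cons_cons i, wordProd_cons ..⟩

theorem bruhatLE_or_simple_mul_bruhatLE {u x : W} {i : B} (h : cs.bruhatLE u (s i * x))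
    (hx : ℓ x < ℓ (s i * x)) : cs.bruhatLE u x ∨ cs.bruhatLE (s i * u) x := by
  obtain ⟨ω, hω, rfl⟩ := cs.exists_isReduced x
  obtain ⟨ρ, hsub, rfl⟩ := h.exists_sublist (hω.cons hx) (wordProd_cons ..)
  rcases sublist_cons_iff.mp hsub with hρ | ⟨ρ, rfl, hρ⟩
  · exact Or.inl ⟨ω, ρ, hω, rfl, hρ, rfl⟩
  · exact Or.inr ⟨ω, ρ, hω, rfl, hρ, by rw [wordProd_cons, simple_mul_simple_cancel_left]⟩

theorem IsUniqueBruhatMin.bruhatLE_of_mem {S : Set W} {m : W} (hm : cs.IsUniqueBruhatMin S m)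
    {z : W} (hz : z ∈ S) : cs.bruhatLE m z := by
  obtain ⟨z₀, ⟨hz₀S, hz₀z⟩, hmin⟩ := (measure cs.length).wf.has_min
    {z' | z' ∈ S ∧ cs.bruhatLE z' z} ⟨z, hz, cs.bruhatLE_refl z⟩
  obtain rfl : z₀ = m := hm.2 z₀ hz₀S fun z' hz'S hz'z₀ => eq_of_bruhatLE_of_length_le hz'z₀
    (not_lt.mp (hmin z' ⟨hz'S, bruhatLE_trans hz'z₀ hz₀z⟩))
  exact hz₀z

end BruhatLE

end CoxeterSystem

open CoxeterSystem

/-- If `s x > x` then `(s x) ▷ y = min {s (x ▷ y), x ▷ y}` in the Bruhat order. -/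
theorem tri_simple_mul {B W : Type*} [Group W] {M : CoxeterMatrix B} (cs : CoxeterSystem M W)
    (tri : W → W → W)
    (htri : ∀ x y : W, cs.IsUniqueBruhatMin (cs.triSet x y) (tri x y))
    (i : B) (x y : W) (hx : cs.length x < cs.length (cs.simple i * x)) :
    (tri (cs.simple i * x) y = tri x y ∨
      tri (cs.simple i * x) y = cs.simple i * tri x y) ∧
    cs.bruhatLE (tri (cs.simple i * x) y) (tri x y) ∧
    cs.bruhatLE (tri (cs.simple i * x) y) (cs.simple i * tri x y) := by
  obtain ⟨u, hu, hu_eq⟩ := (htri x y).1.1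
  have hle : cs.bruhatLE (tri (cs.simple i * x) y) (tri x y) :=
    (htri _ y).bruhatLE_of_mem ⟨u, bruhatLE_simple_mul_of_bruhatLE hu hx, hu_eq⟩
  have hle_simple : cs.bruhatLE (tri (cs.simple i * x) y) (cs.simple i * tri x y) :=
    (htri _ y).bruhatLE_of_mem
      ⟨cs.simple i * u, simple_mul_bruhatLE_simple_mul hu hx, by rw [hu_eq, mul_assoc]⟩
  refine ⟨?_, hle, hle_simple⟩
  obtain ⟨v, hv, hv_eq⟩ := (htri (cs.simple i * x) y).1.1
  rcases bruhatLE_or_simple_mul_bruhatLE hv hx with hvx | hsvx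
  · exact Or.inl (bruhatLE_antisymm hle ((htri x y).bruhatLE_of_mem ⟨v, hvx, hv_eq⟩))
  · have hge : cs.bruhatLE (tri x y) (cs.simple i * tri (cs.simple i * x) y) :=
      (htri x y).bruhatLE_of_mem ⟨cs.simple i * v, hsvx, by rw [hv_eq, mul_assoc]⟩
    rcases eq_or_eq_simple_mul_of_bruhatLE hle hge with h | h
    · exact Or.inl h.symm
    · exact Or.inr (by rw [h, simple_mul_simple_cancel_left])
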